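/- arXiv:2306.06763 — 3 statements merged into one kernel-verified Lean document; each statement's English description precedes it below -/
import Mathlib

section
/- Let N ≥ 1, let Q be a real symmetric positive definite N×N matrix, let B be a real N×N matrix, let s > 0 and T > 0. Then there exists a constant c ∈ (0,1] (depending only on s, T, Q, B) such that for all t ∈ [0,T] and all ξ ∈ ℝᴺ one has ∫₀ᵗ ‖Q^{1/2} exp(τ Bᵀ) ξ‖^{2s} dτ ≥ c · (t/T) · ∫₀ᵀ ‖Q^{1/2} exp(τ Bᵀ) ξ‖^{2s} dτ. -/
/-!
Put `R = Q^{1/2}`, invertible because `Q` is positive definite. For `τ, τ' ∈ [0, T]`,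
`R e^{τ'Bᵀ} ξ = (R e^{(τ'-τ)Bᵀ} R⁻¹) (R e^{τBᵀ} ξ)`, and the conjugated flow `r ↦ R e^{rBᵀ} R⁻¹`
is bounded on the compact interval `[-T, T]`. So the integrand `F` satisfies `F τ' ≤ K F τ` with
`K ≥ 1` independent of `ξ`: every value of `F` on `[0, t]` is at least `1/K` times the mean of `F`
over `[0, T]`, and integrating over `[0, t]` gives the claim with `c = 1/K`.
-/

open MeasureTheory Matrix NormedSpace intervalIntegral
open scoped MatrixOrder

/-- The Euclidean norm of a vector in `ℝᴺ`. -/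
noncomputable def euclNorm {N : ℕ} (x : Fin N → ℝ) : ℝ :=
  Real.sqrt (∑ i, (x i) ^ 2)

open Set

section EuclideanNorm

variable {N : ℕ}

lemma euclNorm_eq_norm_toLp (x : Fin N → ℝ) : euclNorm x = ‖WithLp.toLp 2 x‖ := by
  simp [euclNorm, EuclideanSpace.norm_eq]

lemma euclNorm_nonneg (x : Fin N → ℝ) : 0 ≤ euclNorm x := Real.sqrt_nonneg _

lemma continuous_euclNorm : Continuous (euclNorm (N := N)) := by
  simp only [funext euclNorm_eq_norm_toLp]
  fun_prop

open scoped Matrix.Norms.L2Operator in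
lemma euclNorm_mulVec_le (A : Matrix (Fin N) (Fin N) ℝ) (x : Fin N → ℝ) :
    euclNorm (A *ᵥ x) ≤ ‖A‖ * euclNorm x := by
  simpa [euclNorm_eq_norm_toLp] using A.l2_opNorm_mulVec (WithLp.toLp 2 x)

end EuclideanNorm

section ExpFlow

variable {n : Type*} [Fintype n] [DecidableEq n]

open scoped Matrix.Norms.L2Operator in
lemma continuous_exp_smul (B : Matrix n n ℝ) : Continuous fun r : ℝ => exp (r • B) :=
  (differentiable_exp_smul_const ℝ B).continuous

lemma exp_smul_eq_exp_sub_smul_mul (B : Matrix n n ℝ) (r r' : ℝ) :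
    exp (r' • B) = exp ((r' - r) • B) * exp (r • B) := by
  rw [← Matrix.exp_add_of_commute _ _ ((Commute.refl B).smul_left _ |>.smul_right _),
    ← add_smul, sub_add_cancel]

end ExpFlow

open scoped Matrix.Norms.L2Operator in
lemma exists_euclNorm_mulVec_exp_smul_le {N : ℕ} {R : Matrix (Fin N) (Fin N) ℝ} (hR : IsUnit R)
    (B : Matrix (Fin N) (Fin N) ℝ) (T : ℝ) :
    ∃ D, 1 ≤ D ∧ ∀ τ ∈ Icc 0 T, ∀ τ' ∈ Icc 0 T, ∀ ξ : Fin N → ℝ,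
      euclNorm (R *ᵥ exp (τ' • B) *ᵥ ξ) ≤ D * euclNorm (R *ᵥ exp (τ • B) *ᵥ ξ) := by
  have hcont : Continuous fun r : ℝ => R * exp (r • B) * R⁻¹ :=
    (continuous_const.mul (continuous_exp_smul B)).mul continuous_const
  obtain ⟨C, hC⟩ :=
    (isCompact_Icc (a := -T) (b := T)).exists_bound_of_continuousOn hcont.continuousOn
  refine ⟨max 1 C, le_max_left _ _, fun τ hτ τ' hτ' ξ => ?_⟩
  have hconj : R *ᵥ exp (τ' • B) *ᵥ ξ =
      (R * exp ((τ' - τ) • B) * R⁻¹) *ᵥ (R *ᵥ exp (τ • B) *ᵥ ξ) := by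
    rw [exp_smul_eq_exp_sub_smul_mul B τ τ', mulVec_mulVec, mulVec_mulVec, mulVec_mulVec,
      mul_assoc _ R⁻¹ R, nonsing_inv_mul R ((isUnit_iff_isUnit_det R).mp hR), mul_one, mul_assoc]
  have hbound : ‖R * exp ((τ' - τ) • B) * R⁻¹‖ ≤ max 1 C :=
    (hC _ ⟨by linarith [hτ.2, hτ'.1], by linarith [hτ.1, hτ'.2]⟩).trans (le_max_right _ _)
  rw [hconj]
  exact (euclNorm_mulVec_le _ _).trans (by gcongr; exact euclNorm_nonneg _)

lemma div_mul_integral_le_mul_integral {F : ℝ → ℝ} {K T t : ℝ} (hT : 0 < T) (ht : t ∈ Icc 0 T)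
    (hF : IntervalIntegrable F volume 0 T)
    (hFK : ∀ τ ∈ Icc 0 T, ∀ τ' ∈ Icc 0 T, F τ' ≤ K * F τ) :
    t / T * ∫ τ in 0..T, F τ ≤ K * ∫ τ in 0..t, F τ := by
  have hFt : IntervalIntegrable F volume 0 t :=
    hF.mono_set (uIcc_subset_uIcc_left (by simp [uIcc_of_le hT.le, ht.1, ht.2]))
  have hmean : ∀ τ ∈ Icc 0 t, (∫ τ' in 0..T, F τ') / T ≤ K * F τ := fun τ hτ => by
    rw [div_le_iff₀ hT]
    calc ∫ τ' in 0..T, F τ' ≤ ∫ _ in 0..T, K * F τ :=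
          integral_mono_on hT.le hF intervalIntegrable_const
            fun τ' hτ' => hFK τ ⟨hτ.1, hτ.2.trans ht.2⟩ τ' hτ'
      _ = K * F τ * T := by rw [intervalIntegral.integral_const, smul_eq_mul, sub_zero, mul_comm]
  calc t / T * ∫ τ in 0..T, F τ = ∫ _ in 0..t, (∫ τ' in 0..T, F τ') / T := by
        simp [div_mul_eq_mul_div]
    _ ≤ ∫ τ in 0..t, K * F τ :=
        integral_mono_on ht.1 intervalIntegrable_const (hFt.const_mul K) hmean
    _ = K * ∫ τ in 0..t, F τ := integral_const_mul K F

theorem stmt1_general (N : ℕ) (Q B : Matrix (Fin N) (Fin N) ℝ)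
    (hQ : Q.PosDef) (s T : ℝ) (hs : 0 < s) (hT : 0 < T) :
    ∃ c : ℝ, c ∈ Set.Ioc (0 : ℝ) 1 ∧
      ∀ t ∈ Set.Icc (0 : ℝ) T, ∀ ξ : Fin N → ℝ,
        c * (t / T) * (∫ τ in (0:ℝ)..T,
            euclNorm ((CFC.sqrt Q).mulVec ((NormedSpace.exp (τ • Bᵀ)).mulVec ξ)) ^ (2 * s)) ≤
          ∫ τ in (0:ℝ)..t,
            euclNorm ((CFC.sqrt Q).mulVec ((NormedSpace.exp (τ • Bᵀ)).mulVec ξ)) ^ (2 * s) := by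
  obtain ⟨D, hD1, hD⟩ := exists_euclNorm_mulVec_exp_smul_le
    (CFC.isUnit_sqrt_iff_isStrictlyPositive.mpr hQ.isStrictlyPositive) Bᵀ T
  have hK : 1 ≤ D ^ (2 * s) := Real.one_le_rpow hD1 (by positivity)
  refine ⟨(D ^ (2 * s))⁻¹, ⟨by positivity, inv_le_one_of_one_le₀ hK⟩, fun t ht ξ => ?_⟩
  have hF : Continuous fun τ : ℝ => euclNorm (CFC.sqrt Q *ᵥ exp (τ • Bᵀ) *ᵥ ξ) ^ (2 * s) :=
    (continuous_euclNorm.comp (continuous_const.matrix_mulVec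
      ((continuous_exp_smul Bᵀ).matrix_mulVec continuous_const))).rpow_const
      fun _ => Or.inr (by positivity)
  have hFK : ∀ τ ∈ Icc 0 T, ∀ τ' ∈ Icc 0 T,
      euclNorm (CFC.sqrt Q *ᵥ exp (τ' • Bᵀ) *ᵥ ξ) ^ (2 * s) ≤
        D ^ (2 * s) * euclNorm (CFC.sqrt Q *ᵥ exp (τ • Bᵀ) *ᵥ ξ) ^ (2 * s) := fun τ hτ τ' hτ' => by
    rw [← Real.mul_rpow (by positivity) (euclNorm_nonneg _)]
    exact Real.rpow_le_rpow (euclNorm_nonneg _) (hD τ hτ τ' hτ' ξ) (by positivity)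
  rw [mul_assoc, inv_mul_le_iff₀ (by positivity)]
  exact div_mul_integral_le_mul_integral hT ht (hF.intervalIntegrable 0 T) hFK

/-- `∫₀ᵗ ‖Q^{1/2} e^{τ Bᵀ} ξ‖^{2s} dτ ≥ c (t/T) ∫₀ᵀ ‖Q^{1/2} e^{τ Bᵀ} ξ‖^{2s} dτ`. -/
theorem stmt1 (N : ℕ) (hN : 1 ≤ N) (Q B : Matrix (Fin N) (Fin N) ℝ)
    (hQ : Q.PosDef) (s T : ℝ) (hs : 0 < s) (hT : 0 < T) :
    ∃ c : ℝ, c ∈ Set.Ioc (0 : ℝ) 1 ∧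
      ∀ t ∈ Set.Icc (0 : ℝ) T, ∀ ξ : Fin N → ℝ,
        c * (t / T) * (∫ τ in (0:ℝ)..T,
            euclNorm ((CFC.sqrt Q).mulVec ((NormedSpace.exp (τ • Bᵀ)).mulVec ξ)) ^ (2 * s)) ≤
          ∫ τ in (0:ℝ)..t,
            euclNorm ((CFC.sqrt Q).mulVec ((NormedSpace.exp (τ • Bᵀ)).mulVec ξ)) ^ (2 * s) :=
  stmt1_general N Q B hQ s T hs hT
end

section
/- For every real number x with 0 < x < 1, one has (x − 1)/log x + x ≤ −(1 + e^{−2})/log x. -/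
/-- For `0 < x < 1` one has `(x − 1)/log x + x ≤ -(1 + e^{−2})/log x`. -/
theorem stmt11 (x : ℝ) (hx : x ∈ Set.Ioo (0 : ℝ) 1) :
    (x - 1) / Real.log x + x ≤ -(1 + Real.exp (-2)) / Real.log x := by
  obtain ⟨hx0, hx1⟩ := hx
  have hL : Real.log x < 0 := Real.log_neg hx0 hx1
  have hLne : Real.log x ≠ 0 := ne_of_lt hL
  -- key: exp(-2 - log x) ≥ -2 - log x + 1
  have hkey : -2 - Real.log x + 1 ≤ Real.exp (-2 - Real.log x) :=
    Real.add_one_le_exp _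
  have hexp : Real.exp (-2 - Real.log x) = Real.exp (-2) / x := by
    rw [sub_eq_add_neg, Real.exp_add, Real.exp_neg (Real.log x), Real.exp_log hx0]
    ring
  rw [hexp] at hkey
  -- multiply by x > 0 : (-1 - log x) * x ≤ exp(-2)
  have h2 : (-1 - Real.log x) * x ≤ Real.exp (-2) := by
    have := mul_le_mul_of_nonneg_right hkey (le_of_lt hx0)
    calc (-1 - Real.log x) * x = (-2 - Real.log x + 1) * x := by ring
      _ ≤ Real.exp (-2) / x * x := this
      _ = Real.exp (-2) := by field_simp
  -- goal reduces to -(1 + exp(-2)) ≤ (x - 1) + x * log x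
  have hmain : -(1 + Real.exp (-2)) ≤ (x - 1) + x * Real.log x := by nlinarith
  have hrw : (x - 1) / Real.log x + x = ((x - 1) + x * Real.log x) / Real.log x := by
    field_simp
  rw [hrw]
  exact div_le_div_of_nonpos_of_le (le_of_lt hL) hmain
end

section
/- Let N ≥ 1, let ω ⊆ ℝᴺ be a Lebesgue-measurable set, let T > 0, c ∈ (0,1], and K, M, κ > 0. Let u : [0,T] → L²(ℝᴺ) be continuously differentiable with derivative z = u', and assume: (i) ‖z(t)‖_{L²(ℝᴺ)} ≤ K · M^{1 − c t/T} · ‖z(T)‖_{L²(ℝᴺ)}^{c t/T} for all t ∈ [0,T]; (ii) ‖z(T)‖²_{L²(ℝᴺ)} ≤ κ² ∫₀ᵀ ‖z(t)‖²_{L²(ω)} dt; (iii) ‖u(T)‖²_{L²(ℝᴺ)} ≤ κ² ∫₀ᵀ ‖u(t)‖²_{L²(ω)} dt. Then there exist positive constants C, C₁ and δ (depending only on T, c, K, M, κ) such that whenever the quantity 𝔑 := ( ∫₀ᵀ ‖u(t)‖²_{L²(ω)} dt + ∫₀ᵀ ‖z(t)‖²_{L²(ω)} dt )^{1/2} satisfies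 0 < C₁·𝔑 < δ, one has ‖u(0)‖_{L²(ℝᴺ)} ≤ −C / log( C₁·𝔑 ). -/
/-!
Write `m = κ 𝔑`. The observability inequalities give `‖u T‖ ≤ m` and `‖z T‖ ≤ m`, and then the
logarithmic convexity bound turns into exponential decay `‖z t‖ ≤ K max(M,1) e^{-c L t / T}` with
`L = -log m`. Integrating `z = u'` backwards from `T`,
`‖u 0‖ ≤ ‖u T‖ + ∫₀ᵀ ‖z‖ ≤ m + K max(M,1) T / (c L)`, and `m ≤ 1 / L` since `-m log m ≤ 1`.
-/

open MeasureTheory intervalIntegral Real Set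

theorem rpow_le_max_one {x p : ℝ} (hx : 0 ≤ x) (hp0 : 0 ≤ p) (hp1 : p ≤ 1) : x ^ p ≤ max x 1 := by
  rcases le_total x 1 with h | h
  · exact (rpow_le_one hx h hp0).trans (le_max_right _ _)
  · exact (rpow_le_self_of_one_le h hp1).trans (le_max_left _ _)

theorem le_inv_neg_log {m : ℝ} (h0 : 0 < m) (h1 : m < 1) : m ≤ (-log m)⁻¹ := by
  rw [le_inv_comm₀ h0 (neg_pos.2 (log_neg h0 h1)), ← log_inv]
  exact log_le_self (inv_nonneg.2 h0.le)

theorem integral_exp_neg_mul_le {l T : ℝ} (hl : 0 < l) :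
    ∫ t in (0:ℝ)..T, exp (-l * t) ≤ l⁻¹ := by
  rw [integral_comp_mul_left (fun x => exp x) (neg_ne_zero.2 hl.ne'), integral_exp, smul_eq_mul,
    mul_zero, exp_zero, inv_neg, neg_mul, ← mul_neg, neg_sub]
  exact mul_le_of_le_one_right (inv_nonneg.2 hl.le) (sub_le_self _ (exp_nonneg _))

theorem le_mul_rpow_half_of_sq_le {a A B κ : ℝ} (hκ : 0 ≤ κ) (hB : 0 ≤ B)
    (h : a ^ 2 ≤ κ ^ 2 * A) : a ≤ κ * (A + B) ^ (1 / 2 : ℝ) := by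
  rw [← sqrt_eq_rpow]
  calc a ≤ √(a ^ 2) := (le_abs_self a).trans (sqrt_sq_eq_abs a).ge
  _ ≤ √(κ ^ 2 * A) := sqrt_le_sqrt h
  _ = κ * √A := by rw [sqrt_mul (sq_nonneg κ), sqrt_sq hκ]
  _ ≤ κ * √(A + B) := by gcongr; linarith

section

variable {E : Type*} [NormedAddCommGroup E] [NormedSpace ℝ E] [CompleteSpace E]

theorem norm_le_norm_add_integral_norm_of_hasDerivWithinAt {u z : ℝ → E} {a b : ℝ} (hab : a ≤ b)
    (hu : ∀ t ∈ Icc a b, HasDerivWithinAt u (z t) (Icc a b) t) (hz : ContinuousOn z (Icc a b)) :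
    ‖u a‖ ≤ ‖u b‖ + ∫ t in a..b, ‖z t‖ := by
  have hftc : ∫ t in a..b, z t = u b - u a :=
    integral_eq_sub_of_hasDeriv_right_of_le hab (fun t ht => (hu t ht).continuousWithinAt)
      (fun t ht => (hu t (Ioo_subset_Icc_self ht)).mono_of_mem_nhdsWithin
        (Filter.mem_of_superset (Ioo_mem_nhdsGT ht.2) (Ioo_subset_Icc_self.trans
          (Icc_subset_Icc_left ht.1.le))))
      (hz.intervalIntegrable_of_Icc hab)
  calc ‖u a‖ = ‖u b - ∫ t in a..b, z t‖ := by rw [hftc, sub_sub_cancel]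
  _ ≤ ‖u b‖ + ‖∫ t in a..b, z t‖ := norm_sub_le _ _
  _ ≤ ‖u b‖ + ∫ t in a..b, ‖z t‖ := by gcongr; exact norm_integral_le_integral_norm hab

theorem norm_le_neg_div_log_of_logConvex {u z : ℝ → E} {T c K M m : ℝ} (hT : 0 < T)
    (hc : c ∈ Ioc 0 1) (hK : 0 ≤ K) (hM : 0 ≤ M) (hm0 : 0 < m) (hm1 : m < 1)
    (hu : ∀ t ∈ Icc 0 T, HasDerivWithinAt u (z t) (Icc 0 T) t) (hz : ContinuousOn z (Icc 0 T))
    (hlog : ∀ t ∈ Icc 0 T, ‖z t‖ ≤ K * M ^ (1 - c * t / T) * ‖z T‖ ^ (c * t / T))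
    (huT : ‖u T‖ ≤ m) (hzT : ‖z T‖ ≤ m) :
    ‖u 0‖ ≤ -(1 + K * max M 1 * T / c) / log m := by
  obtain ⟨hc0, hc1⟩ := hc
  set L := -log m with hL_def
  have hL : 0 < L := neg_pos.2 (log_neg hm0 hm1)
  have hdecay : ∀ t ∈ Icc 0 T, ‖z t‖ ≤ K * max M 1 * exp (-(c * L / T) * t) := by
    intro t ⟨ht0, htT⟩
    have hs0 : 0 ≤ c * t / T := by positivity
    have hs1 : c * t / T ≤ 1 := div_le_one_of_le₀ (by nlinarith) hT.le
    calc ‖z t‖ ≤ K * M ^ (1 - c * t / T) * ‖z T‖ ^ (c * t / T) := hlog t ⟨ht0, htT⟩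
    _ ≤ K * max M 1 * m ^ (c * t / T) := by
      gcongr
      exact rpow_le_max_one hM (by linarith) (by linarith)
    _ = K * max M 1 * exp (-(c * L / T) * t) := by
      rw [rpow_def_of_pos hm0, hL_def]
      ring_nf
  have hint : ∫ t in (0:ℝ)..T, ‖z t‖ ≤ K * max M 1 * (c * L / T)⁻¹ :=
    calc ∫ t in (0:ℝ)..T, ‖z t‖ ≤ ∫ t in (0:ℝ)..T, K * max M 1 * exp (-(c * L / T) * t) :=
        integral_mono_on hT.le (hz.norm.intervalIntegrable_of_Icc hT.le)
          ((Continuous.intervalIntegrable (by fun_prop)) _ _) hdecay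
    _ = K * max M 1 * ∫ t in (0:ℝ)..T, exp (-(c * L / T) * t) :=
      intervalIntegral.integral_const_mul _ _
    _ ≤ K * max M 1 * (c * L / T)⁻¹ := by
      gcongr
      exact integral_exp_neg_mul_le (by positivity)
  calc ‖u 0‖ ≤ ‖u T‖ + ∫ t in (0:ℝ)..T, ‖z t‖ :=
      norm_le_norm_add_integral_norm_of_hasDerivWithinAt hT.le hu hz
  _ ≤ L⁻¹ + K * max M 1 * (c * L / T)⁻¹ := add_le_add (huT.trans (le_inv_neg_log hm0 hm1)) hint
  _ = -(1 + K * max M 1 * T / c) / log m := by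
    rw [hL_def]
    field_simp
    ring

end

/-- Conditional logarithmic stability: if `u : [0,T] → L²(ℝᴺ)` is continuously
differentiable with derivative `z`, `z` satisfies the logarithmic convexity bound (i),
and `z`, `u` satisfy the final-state observability inequalities (ii), (iii) from `ω`,
then `‖u(0)‖ ≤ −C / log(C₁ 𝔑)` whenever the observation norm
`𝔑 = (∫₀ᵀ ‖u‖²_{L²(ω)} + ∫₀ᵀ ‖z‖²_{L²(ω)})^{1/2}` is small, with constants
depending only on `(T, c, K, M, κ)`. -/
theorem stmt12 (T c K M κ : ℝ) (hT : 0 < T) (hc : c ∈ Set.Ioc (0 : ℝ) 1)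
    (hK : 0 < K) (hM : 0 < M) (hκ : 0 < κ) :
    ∃ C C₁ δ : ℝ, 0 < C ∧ 0 < C₁ ∧ 0 < δ ∧
      ∀ (N : ℕ), 1 ≤ N → ∀ ω : Set (Fin N → ℝ), MeasurableSet ω →
        ∀ u z : ℝ → Lp ℂ 2 (volume : Measure (Fin N → ℝ)),
          (∀ t ∈ Set.Icc (0 : ℝ) T, HasDerivWithinAt u (z t) (Set.Icc (0 : ℝ) T) t) →
          ContinuousOn z (Set.Icc (0 : ℝ) T) →
          (∀ t ∈ Set.Icc (0 : ℝ) T,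
            ‖z t‖ ≤ K * M ^ (1 - c * t / T) * ‖z T‖ ^ (c * t / T)) →
          ‖z T‖ ^ 2 ≤ κ ^ 2 *
            (∫ t in (0:ℝ)..T, ∫ x in ω, ‖(z t : (Fin N → ℝ) → ℂ) x‖ ^ 2) →
          ‖u T‖ ^ 2 ≤ κ ^ 2 *
            (∫ t in (0:ℝ)..T, ∫ x in ω, ‖(u t : (Fin N → ℝ) → ℂ) x‖ ^ 2) →
          ∀ obsNorm : ℝ,
            obsNorm = ((∫ t in (0:ℝ)..T, ∫ x in ω, ‖(u t : (Fin N → ℝ) → ℂ) x‖ ^ 2) +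
              (∫ t in (0:ℝ)..T, ∫ x in ω, ‖(z t : (Fin N → ℝ) → ℂ) x‖ ^ 2)) ^ ((1:ℝ)/2) →
            0 < C₁ * obsNorm → C₁ * obsNorm < δ →
            ‖u 0‖ ≤ -C / Real.log (C₁ * obsNorm) := by
  have hc0 : 0 < c := hc.1
  refine ⟨1 + K * max M 1 * T / c, κ, 1, by positivity, hκ, one_pos, ?_⟩
  intro N _ ω _ u z hu hz hlog hzobs huobs obsNorm hobs hpos hsmall
  have hobs_nonneg : ∀ v : ℝ → Lp ℂ 2 (volume : Measure (Fin N → ℝ)),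
      0 ≤ ∫ t in (0:ℝ)..T, ∫ x in ω, ‖(v t : (Fin N → ℝ) → ℂ) x‖ ^ 2 := fun v =>
    integral_nonneg hT.le fun t _ => MeasureTheory.integral_nonneg fun x => by positivity
  have huT : ‖u T‖ ≤ κ * obsNorm := by
    rw [hobs]
    exact le_mul_rpow_half_of_sq_le hκ.le (hobs_nonneg z) huobs
  have hzT : ‖z T‖ ≤ κ * obsNorm := by
    rw [hobs, add_comm]
    exact le_mul_rpow_half_of_sq_le hκ.le (hobs_nonneg u) hzobs
  exact norm_le_neg_div_log_of_logConvex hT hc hK.le hM.le hpos hsmall hu hz hlog huT hzT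
end
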